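/- For every m, there exists a left-compressed r-uniform hypergraph G with m edges such that λ(G) = max{λ(H) : H an r-graph with m edges}. -/

import Mathlib

open Finset

/-- The polynomial λ(G, w) = Σ_{e ∈ E} Π_{i ∈ e} w i. -/
def lagPoly (E : Finset (Finset ℕ)) (w : ℕ → ℝ) : ℝ :=
  ∑ e ∈ E, ∏ i ∈ e, w i

/-- A feasible weighting on vertex set [n] = {0, …, n-1}. -/
def IsWeighting (n : ℕ) (w : ℕ → ℝ) : Prop :=
  (∀ i, 0 ≤ w i) ∧ (∀ i, n ≤ i → w i = 0) ∧ ∑ i ∈ Finset.range n, w i = 1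

/-- The Lagrangian of a hypergraph with edge set `E`. -/
noncomputable def lag (E : Finset (Finset ℕ)) : ℝ :=
  sSup {x | ∃ n w, IsWeighting n w ∧ x = lagPoly E w}

/-- The complete r-uniform hypergraph on vertex set {0, …, t-1}. -/
def completeG (t r : ℕ) : Finset (Finset ℕ) :=
  (Finset.range t).powersetCard r

/-- A hypergraph is left-compressed if replacing any vertex of an edge by a
smaller vertex (not already in the edge) again yields an edge. -/
def LeftCompressed (E : Finset (Finset ℕ)) : Prop :=
  ∀ e ∈ E, ∀ j ∈ e, ∀ i < j, i ∉ e → insert i (e.erase j) ∈ E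

/-!
Shifting a vertex `j` of the edges down to `i` is the UV-compression `𝓒 {i} {j}`; it preserves
the number of edges and uniformity, and it does not decrease the Lagrangian. For a weighting with
`w j ≤ w i` every monomial can only grow. Otherwise swap the weights of `i` and `j`: this does
not change the Lagrangian polynomial of the relabelled family `σ E`, and `𝓒 {i} {j}` cannot
tell `σ E` from `E`. Each compression that changes `E` lowers the sum of all vertices of all
edges, so iterating it ends at a left-compressed family. A left-compressed `r`-graph with `m`
edges lives on `{0, …, m + r - 1}`, so there are finitely many and one of them has maximal
Lagrangian.
-/

open FinsetFamily

namespace UV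

section
variable {α : Type*} [GeneralizedBooleanAlgebra α] [DecidableRel (@Disjoint α _ _)]
  [DecidableLE α] [DecidableEq α]

theorem sum_compression {M : Type*} [AddCommMonoid M] (u v : α) (s : Finset α) (g : α → M) :
    ∑ a ∈ 𝓒 u v s, g a = ∑ a ∈ s, if compress u v a ∈ s then g a else g (compress u v a) := by
  rw [compression, sum_union compress_disjoint, filter_image, sum_image compress_injOn, sum_ite]

end

variable {α : Type*} [DecidableEq α] {i j : α} {a : Finset α} {s : Finset (Finset α)}

@[simp] theorem mem_map_swap {v : α} :
    v ∈ a.map (Equiv.swap i j).toEmbedding ↔ Equiv.swap i j v ∈ a := by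
  simp [mem_map_equiv]

@[simp] theorem map_swap_map_swap (a : Finset α) :
    (a.map (Equiv.swap i j).toEmbedding).map (Equiv.swap i j).toEmbedding = a := by
  ext v; simp

theorem map_swap_of_iff (h : i ∈ a ↔ j ∈ a) : a.map (Equiv.swap i j).toEmbedding = a := by
  ext v
  simp only [mem_map_swap, Equiv.swap_apply_def]
  grind

theorem compress_singleton (i j : α) (a : Finset α) :
    compress {i} {j} a = if i ∉ a ∧ j ∈ a then a.map (Equiv.swap i j).toEmbedding else a := by
  simp only [compress, disjoint_singleton_left, singleton_subset_iff]
  split_ifs with h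
  · ext v
    simp only [mem_map_swap, mem_sdiff, sup_eq_union, mem_union, mem_singleton,
      Equiv.swap_apply_def]
    grind
  · rfl

theorem compress_singleton_of_notMem_of_mem (hi : i ∉ a) (hj : j ∈ a) :
    compress {i} {j} a = insert i (a.erase j) := by
  rw [compress_of_disjoint_of_le (disjoint_singleton_left.2 hi) (singleton_subset_iff.2 hj)]
  ext v
  simp only [sup_eq_union, mem_sdiff, mem_union, mem_singleton, mem_insert, mem_erase]
  grind

theorem mem_compression_singleton :
    a ∈ 𝓒 {i} {j} s ↔ if i ∈ a ∧ j ∉ a then a ∈ s ∨ a.map (Equiv.swap i j).toEmbedding ∈ s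
      else a ∈ s ∧ a.map (Equiv.swap i j).toEmbedding ∈ s := by
  have mem_image_compress : (∃ b ∈ s, compress {i} {j} b = a) ↔
      (a ∈ s ∧ ¬(i ∉ a ∧ j ∈ a)) ∨ (i ∈ a ∧ j ∉ a ∧ a.map (Equiv.swap i j).toEmbedding ∈ s) := by
    simp only [compress_singleton]
    constructor
    · rintro ⟨b, hb, rfl⟩
      split_ifs with h
      · right; simp [h, hb]
      · exact Or.inl ⟨hb, h⟩
    · rintro (⟨ha, h⟩ | ⟨hi, hj, ha⟩)
      · exact ⟨a, ha, if_neg h⟩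
      · exact ⟨_, ha, by simp [hi, hj]⟩
  rw [mem_compression, mem_image_compress, compress_singleton]
  by_cases hi : i ∈ a <;> by_cases hj : j ∈ a
  · simp [hi, hj, map_swap_of_iff (iff_of_true hi hj)]
  · simp only [hi, hj, not_true_eq_false, not_false_eq_true, and_self, and_true, true_and,
      ↓reduceIte]
    tauto
  · simp [hi, hj]
  · simp [hi, hj, map_swap_of_iff (iff_of_false hi hj)]

/-- `𝓒 {i} {j}` only sees, for each `b` avoiding `i` and `j`, how many of `insert i b` and
`insert j b` are edges, and swapping `i` and `j` does not change that number. -/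
theorem compression_map_swap (s : Finset (Finset α)) :
    𝓒 {i} {j} (s.map (Equiv.swap i j).finsetCongr.toEmbedding) = 𝓒 {i} {j} s := by
  ext a
  simp only [mem_compression_singleton, mem_map_equiv, Equiv.finsetCongr_symm, Equiv.symm_swap,
    Equiv.finsetCongr_apply, map_swap_map_swap]
  grind

theorem prod_le_prod_compress {R : Type*} [CommSemiring R] [PartialOrder R] [IsOrderedRing R]
    {w : α → R} (hw : ∀ v, 0 ≤ w v) (hji : w j ≤ w i)
    (a : Finset α) : ∏ v ∈ a, w v ≤ ∏ v ∈ compress {i} {j} a, w v := by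
  rw [compress_singleton]
  split_ifs with h
  · rw [prod_map]
    refine prod_le_prod (fun v _ => hw v) fun v hv => ?_
    rcases eq_or_ne v j with rfl | hvj
    · simpa using hji
    · rw [Equiv.coe_toEmbedding, Equiv.swap_apply_of_ne_of_ne (ne_of_mem_of_not_mem hv h.1) hvj]
  · rfl

theorem sum_compress_lt {i j : ℕ} {a : Finset ℕ} (hij : i < j) (hi : i ∉ a) (hj : j ∈ a) :
    ∑ v ∈ compress {i} {j} a, v < ∑ v ∈ a, v := by
  rw [compress_singleton, if_pos ⟨hi, hj⟩, sum_map]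
  refine sum_lt_sum (fun v hv => ?_) ⟨j, hj, by simpa using hij⟩
  rcases eq_or_ne v j with rfl | hvj
  · simpa using hij.le
  · rw [Equiv.coe_toEmbedding, Equiv.swap_apply_of_ne_of_ne (ne_of_mem_of_not_mem hv hi) hvj]

theorem sum_compress_le {i j : ℕ} (hij : i < j) (a : Finset ℕ) :
    ∑ v ∈ compress {i} {j} a, v ≤ ∑ v ∈ a, v := by
  by_cases h : i ∉ a ∧ j ∈ a
  · exact (sum_compress_lt hij h.1 h.2).le
  · rw [compress_singleton, if_neg h]

end UV

open UV

def vertexSum (E : Finset (Finset ℕ)) : ℕ := ∑ a ∈ E, ∑ v ∈ a, v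

theorem vertexSum_compression_lt {E : Finset (Finset ℕ)} {a : Finset ℕ} {i j : ℕ} (hij : i < j)
    (ha : a ∈ E) (hi : i ∉ a) (hj : j ∈ a) (hc : compress {i} {j} a ∉ E) :
    vertexSum (𝓒 {i} {j} E) < vertexSum E := by
  rw [vertexSum, vertexSum, sum_compression]
  refine sum_lt_sum (fun b _ => ?_) ⟨a, ha, ?_⟩
  · split_ifs
    exacts [le_rfl, sum_compress_le hij b]
  · rw [if_neg hc]
    exact sum_compress_lt hij hi hj

section Lagrangian

variable {E : Finset (Finset ℕ)} {n : ℕ} {w : ℕ → ℝ}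

theorem IsWeighting.le_one (hw : IsWeighting n w) (v : ℕ) : w v ≤ 1 := by
  obtain ⟨hw0, hwn, hw1⟩ := hw
  by_cases hv : v < n
  · exact hw1 ▸ single_le_sum (fun u _ => hw0 u) (mem_range.2 hv)
  · rw [hwn v (not_lt.1 hv)]
    exact zero_le_one

theorem IsWeighting.mono {N : ℕ} (hw : IsWeighting n w) (hnN : n ≤ N) : IsWeighting N w := by
  obtain ⟨hw0, hwn, hw1⟩ := hw
  refine ⟨hw0, fun v hv => hwn v (hnN.trans hv), ?_⟩
  rw [← hw1, sum_subset (range_subset_range.2 hnN)]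
  intro v _ hv
  exact hwn v (by simpa using hv)

theorem IsWeighting.comp_swap {i j : ℕ} (hw : IsWeighting n w) (hi : i < n) (hj : j < n) :
    IsWeighting n (w ∘ Equiv.swap i j) := by
  obtain ⟨hw0, hwn, hw1⟩ := hw
  refine ⟨fun v => hw0 _, fun v hv => ?_, ?_⟩
  · rw [Function.comp_apply, Equiv.swap_apply_of_ne_of_ne (by omega) (by omega)]
    exact hwn v hv
  · rw [← hw1]
    refine (Equiv.swap i j).sum_comp _ w fun v hv => ?_
    rcases (Equiv.swap_apply_ne_self_iff.1 hv).2 with rfl | rfl <;> simpa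

theorem isWeighting_single : IsWeighting 1 (Pi.single 0 1) := by
  refine ⟨fun v => ?_, fun v hv => Pi.single_eq_of_ne (by omega) _, by simp⟩
  by_cases hv : v = 0
  · simp [hv]
  · simp [Pi.single_eq_of_ne hv]

theorem lagPoly_le_card (hw : IsWeighting n w) : lagPoly E w ≤ #E := by
  calc lagPoly E w ≤ ∑ _e ∈ E, (1 : ℝ) :=
        sum_le_sum fun e _ => prod_le_one (fun v _ => hw.1 v) fun v _ => hw.le_one v
    _ = #E := by simp

theorem lagPoly_le_lag (hw : IsWeighting n w) : lagPoly E w ≤ lag E :=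
  le_csSup ⟨#E, by rintro _ ⟨n, w, hw, rfl⟩; exact lagPoly_le_card hw⟩ ⟨n, w, hw, rfl⟩

theorem lag_le_of_forall {c : ℝ} (h : ∀ n w, IsWeighting n w → lagPoly E w ≤ c) : lag E ≤ c :=
  csSup_le ⟨_, 1, _, isWeighting_single, rfl⟩ fun _ ⟨n, w, hw, hx⟩ => hx ▸ h n w hw

theorem lagPoly_map_equiv (π : ℕ ≃ ℕ) (w : ℕ → ℝ) :
    lagPoly (E.map π.finsetCongr.toEmbedding) w = lagPoly E (w ∘ π) := by
  simp [lagPoly, sum_map, Equiv.finsetCongr_apply, prod_map]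

theorem lagPoly_le_lagPoly_compression {i j : ℕ} (hw : ∀ v, 0 ≤ w v) (hji : w j ≤ w i) :
    lagPoly E w ≤ lagPoly (𝓒 {i} {j} E) w := by
  rw [lagPoly, lagPoly, sum_compression]
  refine sum_le_sum fun a _ => ?_
  split_ifs
  exacts [le_rfl, prod_le_prod_compress hw hji a]

theorem lag_le_lag_compression (i j : ℕ) (E : Finset (Finset ℕ)) :
    lag E ≤ lag (𝓒 {i} {j} E) := by
  refine lag_le_of_forall fun n w hw => ?_
  rcases le_total (w j) (w i) with hji | hij
  · exact (lagPoly_le_lagPoly_compression hw.1 hji).trans (lagPoly_le_lag hw)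
  have hw' : IsWeighting (max n (max i j + 1)) (w ∘ Equiv.swap i j) :=
    (hw.mono (le_max_left _ _)).comp_swap (by omega) (by omega)
  calc lagPoly E w
      = lagPoly (E.map (Equiv.swap i j).finsetCongr.toEmbedding) (w ∘ Equiv.swap i j) := by
        rw [lagPoly_map_equiv]; congr 1; ext v; simp
    _ ≤ lagPoly (𝓒 {i} {j} (E.map (Equiv.swap i j).finsetCongr.toEmbedding))
          (w ∘ Equiv.swap i j) :=
        lagPoly_le_lagPoly_compression (fun v => hw.1 _) (by simpa using hij)
    _ = lagPoly (𝓒 {i} {j} E) (w ∘ Equiv.swap i j) := by rw [compression_map_swap]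
    _ ≤ lag (𝓒 {i} {j} E) := lagPoly_le_lag hw'

end Lagrangian

theorem exists_leftCompressed_lag_le {r : ℕ} (E : Finset (Finset ℕ))
    (hE : (E : Set (Finset ℕ)).Sized r) :
    ∃ F : Finset (Finset ℕ), LeftCompressed F ∧ (F : Set (Finset ℕ)).Sized r ∧ #F = #E ∧
      lag E ≤ lag F := by
  induction hM : vertexSum E using Nat.strong_induction_on generalizing E with
  | _ M ih =>
    by_cases hLC : LeftCompressed E
    · exact ⟨E, hLC, hE, rfl, le_rfl⟩
    simp only [LeftCompressed, not_forall] at hLC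
    obtain ⟨a, ha, j, hj, i, hij, hi, hc⟩ := hLC
    rw [← compress_singleton_of_notMem_of_mem hi hj] at hc
    obtain ⟨F, hF, hFr, hFE, hlag⟩ := ih _ (hM ▸ vertexSum_compression_lt hij ha hi hj hc)
      (𝓒 {i} {j} E) (hE.uvCompression (by simp)) rfl
    exact ⟨F, hF, hFr, hFE.trans (card_compression _ _ _),
      (lag_le_lag_compression i j E).trans hlag⟩

theorem LeftCompressed.lt_card_add {r v : ℕ} {E : Finset (Finset ℕ)} {a : Finset ℕ}
    (hE : LeftCompressed E) (hEr : (E : Set (Finset ℕ)).Sized r) (ha : a ∈ E) (hv : v ∈ a) :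
    v < #E + r := by
  have hmaps : Set.MapsTo (fun i => insert i (a.erase v)) ↑(range (v + 1) \ a.erase v) ↑E := by
    intro i hi
    simp only [coe_sdiff, coe_range, Set.mem_sdiff, Set.mem_Iio, mem_coe, Nat.lt_succ_iff] at hi
    rcases hi.1.eq_or_lt with rfl | hlt
    · simpa only [insert_erase hv]
    · exact hE a ha v hv i hlt fun h => hi.2 (mem_erase.2 ⟨hlt.ne, h⟩)
  have hinj : Set.InjOn (fun i => insert i (a.erase v)) ↑(range (v + 1) \ a.erase v) :=
    fun i hi _ _ h => (insert_inj (mem_sdiff.1 hi).2).1 h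
  have hcard := (le_card_sdiff (a.erase v) (range (v + 1))).trans
    (card_le_card_of_injOn _ hmaps hinj)
  have hr : 0 < r := hEr ha ▸ card_pos.2 ⟨v, hv⟩
  rw [card_range, card_erase_of_mem hv, hEr ha] at hcard
  omega

theorem exists_sized_card {r : ℕ} (hr : 0 < r) (m : ℕ) :
    ∃ E : Finset (Finset ℕ), (E : Set (Finset ℕ)).Sized r ∧ #E = m := by
  have hnotMem : ∀ k, r - 1 + k ∉ range (r - 1) := fun k => by simp
  refine ⟨(range m).image fun k => insert (r - 1 + k) (range (r - 1)), ?_, ?_⟩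
  · intro e he
    obtain ⟨k, -, rfl⟩ := mem_image.1 he
    rw [card_insert_of_notMem (hnotMem k), card_range]
    omega
  · rw [card_image_of_injective, card_range]
    intro k l h
    simpa using (insert_inj (hnotMem k)).1 h

/-- For every m there is a left-compressed r-graph with m edges attaining the
maximum Lagrangian among all r-graphs with m edges. -/
theorem stmt_19 (r m : ℕ) (hr : 0 < r) :
    ∃ E : Finset (Finset ℕ), LeftCompressed E ∧ (∀ e ∈ E, e.card = r) ∧
      E.card = m ∧
      ∀ E' : Finset (Finset ℕ), (∀ e ∈ E', e.card = r) → E'.card = m →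
        lag E' ≤ lag E := by
  set S := {E : Finset (Finset ℕ) | LeftCompressed E ∧ (E : Set (Finset ℕ)).Sized r ∧ #E = m}
  have hS : S.Finite := by
    refine (finite_toSet ((range (m + r)).powersetCard r).powerset).subset
      fun E ⟨hE, hEr, hEm⟩ => mem_powerset.2 fun a ha => ?_
    exact mem_powersetCard.2 ⟨fun v hv => mem_range.2 (hEm ▸ hE.lt_card_add hEr ha hv), hEr ha⟩
  obtain ⟨E₀, hE₀r, hE₀m⟩ := exists_sized_card hr m
  obtain ⟨F₀, hF₀, hF₀r, hF₀m, -⟩ := exists_leftCompressed_lag_le E₀ hE₀r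
  obtain ⟨E, ⟨hE, hEr, hEm⟩, hmax⟩ := S.exists_max_image lag hS ⟨F₀, hF₀, hF₀r, hF₀m.trans hE₀m⟩
  refine ⟨E, hE, fun e he => hEr he, hEm, fun E' hE'r hE'm => ?_⟩
  obtain ⟨F, hF, hFr, hFm, hlag⟩ := exists_leftCompressed_lag_le E' fun e he => hE'r e he
  exact hlag.trans (hmax F ⟨hF, hFr, hFm.trans hE'm⟩)
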